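/- Let A be a free abelian group with basis {e_i}. Then Γ(A) is a free abelian group with basis {γ(e_i)} ∪ {[e_i, e_j] : i < j}, where [x,y] = γ(x+y) − γ(x) − γ(y). -/

import Mathlib

universe u v

/-- A function between abelian groups is quadratic: it is even and its cross effect
`(a, b) ↦ f (a + b) - f a - f b` is bilinear. -/
def IsQuadratic {A B : Type*} [AddCommGroup A] [AddCommGroup B] (f : A → B) : Prop :=
  (∀ a, f (-a) = f a) ∧
  ∃ bil : A →+ A →+ B, ∀ a b, f (a + b) - f a - f b = bil a b

/-- `γ : A → Γ` is a universal quadratic map: it is quadratic and every quadratic map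
out of `A` factors uniquely through `γ` by a group homomorphism. -/
def IsUniversalQuadratic {A : Type u} {Γ : Type v} [AddCommGroup A] [AddCommGroup Γ]
    (γ : A → Γ) : Prop :=
  IsQuadratic γ ∧
  ∀ (B : Type max u v) [AddCommGroup B] (f : A → B), IsQuadratic f →
    ∃! F : Γ →+ B, ∀ a, F (γ a) = f a

/-!
Let `u` be the bilinear map with `u (eᵢ, eⱼ) = e_{ij}` for `i ≤ j` and `u (eᵢ, eⱼ) = 0` for
`i > j`, where `e_{ii}` stands for the coordinate indexed by `Sum.inl i`. Then `q a = u (a, a)`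
is quadratic, with cross effect `u + uᵀ`, so universality gives `F : Γ(A) → ℤ^(ι ⊕ {i < j})`
with `F ∘ γ = q`, and `F` sends the proposed family to the standard basis. Conversely, the map
`Φ` sending the standard basis to the family satisfies `Φ ∘ q = γ`, because a quadratic map on
a free abelian group is determined by its values on the basis and its cross effects on pairs of
basis vectors; uniqueness in the universal property then gives `Φ ∘ F = id`.
-/

section CrossEffect

variable {A B C : Type*} [AddCommGroup A] [AddCommGroup B] [AddCommGroup C]

def crossEffect (f : A → B) (a a' : A) : B :=
  f (a + a') - f a - f a'

theorem crossEffect_comm (f : A → B) (a a' : A) : crossEffect f a a' = crossEffect f a' a := by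
  simp only [crossEffect, add_comm a a']
  abel

theorem crossEffect_sub (f g : A → B) (a a' : A) :
    crossEffect (fun x => f x - g x) a a' = crossEffect f a a' - crossEffect g a a' := by
  simp only [crossEffect]
  abel

theorem crossEffect_comp (f : A → B) (g : B →+ C) (a a' : A) :
    crossEffect (fun x => g (f x)) a a' = g (crossEffect f a a') := by
  simp only [crossEffect, map_sub]

theorem crossEffect_apply_self (u : A →+ A →+ B) (a a' : A) :
    crossEffect (fun x => u x x) a a' = u a a' + u a' a := by
  simp only [crossEffect, map_add, AddMonoidHom.add_apply]
  abel

theorem isQuadratic_iff {f : A → B} : IsQuadratic f ↔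
    (∀ a, f (-a) = f a) ∧ ∃ β : A →+ A →+ B, ∀ a a', crossEffect f a a' = β a a' :=
  Iff.rfl

theorem isQuadratic_apply_self (u : A →+ A →+ B) : IsQuadratic fun a => u a a :=
  ⟨fun a => by simp only [map_neg, AddMonoidHom.neg_apply, neg_neg],
    u + u.flip, fun a a' => crossEffect_apply_self u a a'⟩

namespace IsQuadratic

variable {f g : A → B}

theorem comp (hf : IsQuadratic f) (h : B →+ C) : IsQuadratic fun a => h (f a) := by
  obtain ⟨hneg, β, hβ⟩ := isQuadratic_iff.mp hf
  refine isQuadratic_iff.mpr ⟨fun a => by rw [hneg], (AddMonoidHom.compHom h).comp β, ?_⟩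
  intro a a'
  rw [crossEffect_comp, hβ]
  rfl

theorem sub (hf : IsQuadratic f) (hg : IsQuadratic g) : IsQuadratic fun a => f a - g a := by
  obtain ⟨hf_neg, βf, hβf⟩ := isQuadratic_iff.mp hf
  obtain ⟨hg_neg, βg, hβg⟩ := isQuadratic_iff.mp hg
  refine isQuadratic_iff.mpr ⟨fun a => by rw [hf_neg, hg_neg], βf - βg, ?_⟩
  intro a a'
  rw [crossEffect_sub, hβf, hβg]
  rfl

theorem map_zero (hf : IsQuadratic f) : f 0 = 0 := by
  obtain ⟨-, β, hβ⟩ := hf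
  simpa [crossEffect] using hβ 0 0

theorem crossEffect_self (hf : IsQuadratic f) (a : A) : crossEffect f a a = f a + f a := by
  obtain ⟨hneg, β, hβ⟩ := isQuadratic_iff.mp hf
  calc crossEffect f a a = -β a (-a) := by rw [hβ, map_neg, neg_neg]
    _ = -crossEffect f a (-a) := by rw [hβ]
    _ = f a + f a := by simp only [crossEffect, add_neg_cancel, hf.map_zero, hneg]; abel

end IsQuadratic

end CrossEffect

section Basis

variable {ι A B : Type*} [LinearOrder ι] [AddCommGroup A] [AddCommGroup B] {f g : A → B}

theorem IsQuadratic.eq_zero_of_basis (hf : IsQuadratic f) (b : Module.Basis ι ℤ A)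
    (h_basis : ∀ i, f (b i) = 0) (h_cross : ∀ i j, i < j → crossEffect f (b i) (b j) = 0) :
    f = 0 := by
  obtain ⟨-, β, hβ⟩ := isQuadratic_iff.mp hf
  have hβ_basis (i j : ι) : β (b i) (b j) = 0 := by
    rw [← hβ]
    rcases lt_trichotomy i j with h | rfl | h
    · exact h_cross i j h
    · rw [hf.crossEffect_self, h_basis, add_zero]
    · rw [crossEffect_comm]; exact h_cross j i h
  have hβ_row (i : ι) : β (b i) = 0 :=
    AddMonoidHom.toIntLinearMap_injective <| b.ext fun j => hβ_basis i j
  have hβ_zero : β = 0 :=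
    AddMonoidHom.toIntLinearMap_injective <| b.ext fun i => hβ_row i
  have hf_add (a a' : A) : f (a + a') = f a + f a' := by
    have h := hβ a a'
    rw [hβ_zero, AddMonoidHom.zero_apply, AddMonoidHom.zero_apply, crossEffect,
      sub_sub, sub_eq_zero] at h
    exact h
  have hf_lin : (AddMonoidHom.mk' f hf_add).toIntLinearMap = 0 := b.ext h_basis
  exact funext fun a => LinearMap.congr_fun hf_lin a

theorem IsQuadratic.ext_basis (hf : IsQuadratic f) (hg : IsQuadratic g) (b : Module.Basis ι ℤ A)
    (h_basis : ∀ i, f (b i) = g (b i))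
    (h_cross : ∀ i j, i < j → crossEffect f (b i) (b j) = crossEffect g (b i) (b j)) :
    f = g := by
  have h := (hf.sub hg).eq_zero_of_basis b (fun i => sub_eq_zero.mpr (h_basis i))
    (fun i j hij => by rw [crossEffect_sub, h_cross i j hij, sub_self])
  exact funext fun a => sub_eq_zero.mp (congrFun h a)

end Basis

noncomputable section Model

variable {ι A G : Type*} [LinearOrder ι] [AddCommGroup A] [AddCommGroup G]

abbrev QuadIndex (ι : Type*) [LT ι] : Type _ := ι ⊕ {p : ι × ι // p.1 < p.2}

def upperMonomial (i j : ι) : QuadIndex ι →₀ ℤ :=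
  if h : i < j then Finsupp.single (.inr ⟨(i, j), h⟩) 1
  else if i = j then Finsupp.single (.inl i) 1 else 0

def upperForm (b : Module.Basis ι ℤ A) : A →+ A →+ (QuadIndex ι →₀ ℤ) :=
  LinearMap.toAddMonoidHom'.comp
    (b.constr ℤ fun i => b.constr ℤ fun j => upperMonomial i j).toAddMonoidHom

def upperQuadratic (b : Module.Basis ι ℤ A) : A → QuadIndex ι →₀ ℤ :=
  fun a => upperForm b a a

variable (b : Module.Basis ι ℤ A)

theorem upperForm_basis (i j : ι) : upperForm b (b i) (b j) = upperMonomial i j := by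
  simp [upperForm]

theorem isQuadratic_upperQuadratic : IsQuadratic (upperQuadratic b) :=
  isQuadratic_apply_self (upperForm b)

theorem upperQuadratic_basis (i : ι) : upperQuadratic b (b i) = Finsupp.single (.inl i) 1 := by
  simp [upperQuadratic, upperForm_basis, upperMonomial]

theorem crossEffect_upperQuadratic_basis {i j : ι} (h : i < j) :
    crossEffect (upperQuadratic b) (b i) (b j) = Finsupp.single (.inr ⟨(i, j), h⟩) 1 := by
  unfold upperQuadratic
  rw [crossEffect_apply_self, upperForm_basis, upperForm_basis]
  simp [upperMonomial, h, h.ne', not_lt_of_gt h]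

def gammaFamily (γ : A → G) : QuadIndex ι → G :=
  Sum.elim (fun i => γ (b i)) (fun p => crossEffect γ (b p.1.1) (b p.1.2))

theorem linearCombination_upperQuadratic {γ : A → G} (hγ : IsQuadratic γ) (a : A) :
    Finsupp.linearCombination ℤ (gammaFamily b γ) (upperQuadratic b a) = γ a := by
  refine congrFun (((isQuadratic_upperQuadratic b).comp
    (Finsupp.linearCombination ℤ (gammaFamily b γ)).toAddMonoidHom).ext_basis hγ b ?_ ?_) a
  · intro i
    simp [upperQuadratic_basis, gammaFamily]
  · intro i j h
    rw [crossEffect_comp, crossEffect_upperQuadratic_basis b h]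
    simp [gammaFamily]

theorem map_gammaFamily {γ : A → G} (F : G →+ (QuadIndex ι →₀ ℤ))
    (hF : ∀ a, F (γ a) = upperQuadratic b a) (k : QuadIndex ι) :
    F (gammaFamily b γ k) = Finsupp.single k 1 := by
  rcases k with i | ⟨⟨i, j⟩, h⟩
  · simp [gammaFamily, hF, upperQuadratic_basis]
  · rw [gammaFamily, Sum.elim_inr, ← crossEffect_comp, funext hF,
      crossEffect_upperQuadratic_basis b h]

end Model

/-- If `A` is free abelian with basis `{e_i}`, then `Γ(A)` is free abelian with basis
`{γ(e_i)} ∪ {[e_i, e_j] : i < j}`, where `[x, y] = γ(x+y) − γ(x) − γ(y)`. -/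
theorem gamma_of_free_abelian_basis {A G : Type u} [AddCommGroup A] [AddCommGroup G]
    {ι : Type u} [LinearOrder ι] (b : Module.Basis ι ℤ A)
    (γ : A → G) (hγ : IsUniversalQuadratic γ) :
    ∃ B : Module.Basis (ι ⊕ {p : ι × ι // p.1 < p.2}) ℤ G,
      (∀ i : ι, B (Sum.inl i) = γ (b i)) ∧
      (∀ p : {p : ι × ι // p.1 < p.2},
        B (Sum.inr p) = γ (b p.val.1 + b p.val.2) - γ (b p.val.1) - γ (b p.val.2)) := by
  obtain ⟨hγ_quad, hγ_univ⟩ := hγ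
  obtain ⟨F, hF, -⟩ := hγ_univ _ (upperQuadratic b) (isQuadratic_upperQuadratic b)
  let Φ := Finsupp.linearCombination ℤ (gammaFamily b γ)
  have hΦF : Φ.toAddMonoidHom.comp F = AddMonoidHom.id G :=
    (hγ_univ G γ hγ_quad).unique
      (fun a => by simp [hF, Φ, linearCombination_upperQuadratic b hγ_quad]) (fun _ => rfl)
  have hFΦ : F.toIntLinearMap.comp Φ = LinearMap.id :=
    Finsupp.lhom_ext fun k c => by simp [Φ, map_gammaFamily b F hF]
  let e : G ≃ₗ[ℤ] QuadIndex ι →₀ ℤ :=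
    LinearEquiv.ofLinearMap (f := F.toIntLinearMap) (g := Φ) hFΦ
      (LinearMap.toAddMonoidHom_injective hΦF)
  have he (k : QuadIndex ι) : Module.Basis.ofRepr e k = gammaFamily b γ k := by
    simp [e, Φ]
  exact ⟨.ofRepr e, fun i => he (.inl i), fun p => he (.inr p)⟩
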